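/- arXiv:2411.13763 — 4 statements merged into one kernel-verified Lean document; each statement's English description precedes it below -/
import Mathlib

section
/- Let d ≥ 2s ≥ 2. There exists a subset H of {x ∈ {0,1}^d : ‖x‖₀ = s} such that any two distinct elements of H have Hamming distance greater than s/16, and log|H| ≥ c·s·log(d/s) for an absolute constant c > 0. -/
/-!
Split the `d` coordinates into `s` blocks of `q = ⌊d/s⌋ ≥ 2` positions and send a word
`f ∈ [q]^s` to the `s`-sparse vector with a one at position `f i` of block `i`; this does not
decrease Hamming distances. A maximal `r`-separated set of words is covered by its radius-`r`
balls (Gilbert–Varshamov), so with `r = ⌊s/16⌋` there is a code of minimum distance `> r` and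
at least `q^s / (C(s,r) q^r) ≥ q^(s-8r) ≥ q^(s/2)` words, using `C(s,r) ≤ (e s/r)^r ≤ 2^(7r)`.
As `d/s ≤ q²`, this gives `log |H| ≥ (s/4) log (d/s)`.
-/

open Finset

theorem choose_le_exp_mul_div_pow (n k : ℕ) :
    (n.choose k : ℝ) ≤ (Real.exp 1 * n / k) ^ k := by
  rcases k.eq_zero_or_pos with rfl | hk
  · simp
  have hk' : (0 : ℝ) < k := by exact_mod_cast hk
  calc (n.choose k : ℝ) ≤ n ^ k / k.factorial := Nat.choose_le_pow_div k n
    _ = (n / k) ^ k * (k ^ k / k.factorial) := by rw [div_pow]; field_simp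
    _ ≤ (n / k) ^ k * Real.exp k := by gcongr; exact Real.pow_div_factorial_le_exp _ hk'.le k
    _ = (Real.exp 1 * n / k) ^ k := by
      rw [mul_div_assoc, mul_pow, ← Real.exp_nat_mul, mul_one, mul_comm]

theorem choose_div_sixteen_le (s : ℕ) : s.choose (s / 16) ≤ 2 ^ (7 * (s / 16)) := by
  set r := s / 16
  rcases r.eq_zero_or_pos with hr | hr
  · simp [hr]
  have hsr : (s : ℝ) ≤ 31 * r := by exact_mod_cast (by omega : s ≤ 31 * r)
  have hr' : (0 : ℝ) < r := by exact_mod_cast hr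
  have hbase : Real.exp 1 * s / r ≤ 2 ^ 7 := by
    rw [div_le_iff₀ hr']
    nlinarith [Real.exp_one_lt_d9, Real.exp_pos 1]
  have : (s.choose r : ℝ) ≤ 2 ^ (7 * r) := by
    rw [pow_mul]
    exact (choose_le_exp_mul_div_pow s r).trans (by gcongr)
  exact_mod_cast this

section HammingBall

variable {ι β : Type*} [Fintype ι] [DecidableEq ι] [Fintype β] [DecidableEq β]

theorem card_hammingBall_le (x : ι → β) {r : ℕ} (hr : r ≤ Fintype.card ι) :
    #{y | hammingDist x y ≤ r} ≤ (Fintype.card ι).choose r * Fintype.card β ^ r := by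
  let patch (D : Finset ι) (g : D → β) : ι → β := fun i => if h : i ∈ D then g ⟨i, h⟩ else x i
  have hcover : ({y | hammingDist x y ≤ r} : Finset (ι → β)) ⊆
      (powersetCard r univ).biUnion fun D => univ.image (patch D) := by
    intro y hy
    obtain ⟨D, hdiff, hD⟩ := exists_superset_card_eq (s := {i | x i ≠ y i}) (mem_filter.1 hy).2 hr
    refine mem_biUnion.2 ⟨D, mem_powersetCard.2 ⟨subset_univ D, hD⟩,
      mem_image.2 ⟨fun i => y i, mem_univ _, funext fun i => ?_⟩⟩
    by_cases hi : i ∈ D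
    · simp [patch, hi]
    · have hxy : i ∉ ({i | x i ≠ y i} : Finset ι) := fun h => hi (hdiff h)
      simpa [patch, hi] using hxy
  refine (card_le_card hcover).trans <| (card_biUnion_le_card_mul _ _ _ fun D hD => ?_).trans_eq
    (by rw [card_powersetCard, card_univ])
  calc #(univ.image (patch D)) ≤ #(univ : Finset (D → β)) := card_image_le
    _ = Fintype.card β ^ r := by simp [(mem_powersetCard.1 hD).2]

theorem exists_separated_card_mul_le (r B : ℕ)
    (hB : ∀ x : ι → β, #{y | hammingDist x y ≤ r} ≤ B) :
    ∃ C : Finset (ι → β), (C : Set (ι → β)).Pairwise (fun x y => r < hammingDist x y) ∧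
      Fintype.card (ι → β) ≤ #C * B := by
  classical
  let separated : Finset (Finset (ι → β)) :=
    {C | (C : Set (ι → β)).Pairwise fun x y => r < hammingDist x y}
  obtain ⟨C, hC, hmax⟩ := exists_max_image separated card ⟨∅, by simp [separated]⟩
  have hsep := (mem_filter.1 hC).2
  have hcover : ∀ y, ∃ x ∈ C, hammingDist x y ≤ r := by
    by_contra! ⟨y, hfar⟩
    have hy : y ∉ C := fun hy => by simpa using hfar y hy
    have hins : insert y C ∈ separated := by
      refine mem_filter.2 ⟨mem_univ _, ?_⟩
      rw [coe_insert, Set.pairwise_insert]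
      exact ⟨hsep, fun x hx _ => ⟨hammingDist_comm x y ▸ hfar x hx, hfar x hx⟩⟩
    have := hmax _ hins
    rw [card_insert_of_notMem hy] at this
    omega
  refine ⟨C, hsep, ?_⟩
  rw [← card_univ]
  refine (card_le_card fun y _ => ?_).trans (card_biUnion_le_card_mul C _ B fun x _ => hB x)
  obtain ⟨x, hx, hxy⟩ := hcover y
  exact mem_biUnion.2 ⟨x, hx, by simpa using hxy⟩

end HammingBall

theorem exists_separated_pow_le_card {q : ℕ} (hq : 2 ≤ q) (s : ℕ) :
    ∃ C : Finset (Fin s → Fin q), (C : Set (Fin s → Fin q)).Pairwise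
      (fun x y => s / 16 < hammingDist x y) ∧ q ^ (s - 8 * (s / 16)) ≤ #C := by
  set r := s / 16
  have hball : s.choose r * q ^ r ≤ q ^ (8 * r) := by
    calc s.choose r * q ^ r ≤ 2 ^ (7 * r) * q ^ r := by gcongr; exact choose_div_sixteen_le s
      _ ≤ q ^ (7 * r) * q ^ r := by gcongr
      _ = q ^ (8 * r) := by ring
  obtain ⟨C, hCsep, hCcard⟩ := exists_separated_card_mul_le r _
    fun x : Fin s → Fin q => (card_hammingBall_le x (by simp; omega)).trans (by simpa using hball)
  refine ⟨C, hCsep, Nat.le_of_mul_le_mul_right ?_ (pow_pos (by omega : 0 < q) (8 * r))⟩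
  rw [← pow_add, Nat.sub_add_cancel (by omega)]
  simpa using hCcard

section GraphIndicator

variable {ι β γ : Type*} [Fintype ι] [DecidableEq γ] [Fintype γ]

def graphIndicator (e : ι × β ↪ γ) (f : ι → β) (t : γ) : Bool :=
  decide (∃ i, e (i, f i) = t)

theorem card_graphIndicator_eq_true (e : ι × β ↪ γ) (f : ι → β) :
    #{t | graphIndicator e f t = true} = Fintype.card ι := by
  have hinj : Function.Injective fun i => e (i, f i) :=
    fun i j h => (Prod.ext_iff.1 (e.injective h)).1
  rw [← card_univ, ← card_image_of_injective univ hinj]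
  congr 1
  ext t
  simp [graphIndicator, eq_comm]

theorem hammingDist_le_hammingDist_graphIndicator [DecidableEq β] (e : ι × β ↪ γ) (f g : ι → β) :
    hammingDist f g ≤ hammingDist (graphIndicator e f) (graphIndicator e g) := by
  refine card_le_card_of_injOn (fun i => e (i, f i)) (fun i hi => ?_)
    fun i _ j _ h => (Prod.ext_iff.1 (e.injective h)).1
  have hfi : f i ≠ g i := by simpa using hi
  suffices ¬∃ j, e (j, g j) = e (i, f i) by simpa [graphIndicator] using this
  rintro ⟨j, hj⟩
  obtain ⟨rfl, hgf⟩ := Prod.ext_iff.1 (e.injective hj)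
  exact hfi hgf.symm

theorem graphIndicator_injective [DecidableEq β] (e : ι × β ↪ γ) :
    Function.Injective (graphIndicator e) := fun f g h => by
  simpa [h] using hammingDist_le_hammingDist_graphIndicator e f g

end GraphIndicator

theorem log_div_le_two_mul_log_natDiv {d s : ℕ} (hs : 0 < s) (hsd : 2 * s ≤ d) :
    Real.log ((d : ℝ) / s) ≤ 2 * Real.log (d / s : ℕ) := by
  have hq : (2 : ℝ) ≤ (d / s : ℕ) := by exact_mod_cast (Nat.le_div_iff_mul_le hs).2 (by linarith)
  have hlt : (d : ℝ) < s * ((d / s : ℕ) + 1) := by exact_mod_cast Nat.lt_mul_div_succ d hs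
  have hs' : (0 : ℝ) < s := by exact_mod_cast hs
  have hd : (0 : ℝ) < d := by exact_mod_cast (by omega : 0 < d)
  rw [← Nat.cast_ofNat, ← Real.log_pow]
  refine Real.log_le_log (div_pos hd hs') ?_
  rw [div_le_iff₀ hs']
  nlinarith

/-- Sparse Varshamov–Gilbert packing: there is an absolute constant c > 0 such that
for all d ≥ 2s ≥ 2 there is a family H of s-sparse binary vectors in {0,1}^d whose
pairwise Hamming distances exceed s/16 and with log|H| ≥ c·s·log(d/s). -/
theorem stmt6 :
    ∃ c : ℝ, 0 < c ∧ ∀ d s : ℕ, 1 ≤ s → 2 * s ≤ d →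
      ∃ H : Finset (Fin d → Bool),
        (∀ x ∈ H, (univ.filter fun i => x i = true).card = s) ∧
        (∀ x ∈ H, ∀ y ∈ H, x ≠ y → (s : ℝ) / 16 < (hammingDist x y : ℝ)) ∧
        c * s * Real.log ((d : ℝ) / s) ≤ Real.log H.card := by
  refine ⟨1 / 4, by norm_num, fun d s hs hsd => ?_⟩
  set q := d / s
  have hq : 2 ≤ q := (Nat.le_div_iff_mul_le hs).2 (by linarith)
  obtain ⟨C, hCsep, hCcard⟩ := exists_separated_pow_le_card hq s
  let e : Fin s × Fin q ↪ Fin d :=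
    finProdFinEquiv.toEmbedding.trans (Fin.castLEEmb (Nat.mul_div_le d s))
  refine ⟨C.image (graphIndicator e), ?_, ?_, ?_⟩
  · simp only [mem_image]
    rintro _ ⟨f, -, rfl⟩
    simpa using card_graphIndicator_eq_true e f
  · simp only [mem_image]
    rintro _ ⟨f, hf, rfl⟩ _ ⟨g, hg, rfl⟩ hfg
    have hdist := (hCsep hf hg (ne_of_apply_ne _ hfg)).trans_le
      (hammingDist_le_hammingDist_graphIndicator e f g)
    rw [div_lt_iff₀ (by norm_num)]
    exact_mod_cast (by omega : s < hammingDist (graphIndicator e f) (graphIndicator e g) * 16)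
  · rw [card_image_of_injective _ (graphIndicator_injective e)]
    have hsr : (s : ℝ) / 2 ≤ (s - 8 * (s / 16) : ℕ) := by
      rw [div_le_iff₀ (by norm_num)]
      exact_mod_cast (by omega : s ≤ (s - 8 * (s / 16)) * 2)
    have hlogq : 0 ≤ Real.log q := Real.log_nonneg (by exact_mod_cast (by omega : 1 ≤ q))
    calc 1 / 4 * s * Real.log ((d : ℝ) / s) ≤ s / 2 * Real.log q := by
          nlinarith [log_div_le_two_mul_log_natDiv hs hsd]
      _ ≤ (s - 8 * (s / 16) : ℕ) * Real.log q := by gcongr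
      _ = Real.log ((q ^ (s - 8 * (s / 16)) : ℕ) : ℝ) := by push_cast; rw [Real.log_pow]
      _ ≤ Real.log #C := Real.log_le_log (by positivity) (by exact_mod_cast hCcard)
end

section
/- Let Z ~ N(0, I_d), θ* ∈ ℝ^d, and let f_{u|z}(0) ≤ C for all z. Then for every unit vector v, the quantity 2∫(zᵀv)² f_{u|z}(0) φ(θ*ᵀz)∏_jφ(z_j) dz is at most 2C·vᵀ(I + θ*θ*ᵀ)^{−1}v / ((2π)^{1/2}|I + θ*θ*ᵀ|^{1/2}), which is at most 2C/((2π)^{1/2}(1 + ‖θ*‖₂²)^{1/2}). Consequently the maximal eigenvalue of this quadratic form tends to 0 at rate 1/‖θ*‖₂ as ‖θ*‖₂ → ∞. -/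
/-!
With `M = I + θθᵀ` one has `φ(θᵀz) ∏ φ(zⱼ) = (2π)^{-(d+1)/2} exp(-zᵀMz/2)`, so `0 ≤ f ≤ C`
bounds the integral by `C (2π)^{-(d+1)/2} ∫ (vᵀz)² exp(-zᵀMz/2) dz`. Writing `M = BᵀB`, the
substitution `y = Bz` turns this into a second moment of the standard Gaussian, which gives
`(2π)^{d/2} vᵀM⁻¹v / √(det M)`. Finally `det M = 1 + ‖θ‖²`, and by Sherman–Morrison
`vᵀM⁻¹v = ‖v‖² - (θᵀv)² / (1 + ‖θ‖²) ≤ 1`.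
-/

open Finset MeasureTheory Matrix Real ProbabilityTheory

lemma gaussianPDFReal_zero_one (x : ℝ) :
    gaussianPDFReal 0 1 x = (√(2 * π))⁻¹ * exp (-x ^ 2 / 2) := by
  simp [gaussianPDFReal_def]

lemma integral_mul_exp_neg_sq_div_two_eq_integral_gaussianReal (g : ℝ → ℝ) :
    ∫ x, g x * exp (-x ^ 2 / 2) = √(2 * π) * ∫ x, g x ∂gaussianReal 0 1 := by
  rw [integral_gaussianReal_eq_integral_smul one_ne_zero, ← integral_const_mul]
  congr 1 with x
  rw [gaussianPDFReal_zero_one, smul_eq_mul, ← mul_assoc, ← mul_assoc,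
    mul_inv_cancel₀ (by positivity), one_mul, mul_comm]

lemma integrable_pow_mul_exp_neg_sq_div_two (n : ℕ) :
    Integrable (fun x : ℝ => x ^ n * exp (-x ^ 2 / 2)) := by
  have := integrable_rpow_mul_exp_neg_mul_sq (b := 1 / 2) (by norm_num) (s := n)
    (by linarith [n.cast_nonneg (α := ℝ)])
  simp_rw [rpow_natCast] at this
  convert this using 4
  ring

lemma integral_exp_neg_sq_div_two : ∫ x : ℝ, exp (-x ^ 2 / 2) = √(2 * π) := by
  simpa using integral_mul_exp_neg_sq_div_two_eq_integral_gaussianReal 1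

lemma integral_mul_exp_neg_sq_div_two : ∫ x : ℝ, x * exp (-x ^ 2 / 2) = 0 := by
  simpa [integral_id_gaussianReal] using
    integral_mul_exp_neg_sq_div_two_eq_integral_gaussianReal id

lemma integral_sq_mul_exp_neg_sq_div_two : ∫ x : ℝ, x ^ 2 * exp (-x ^ 2 / 2) = √(2 * π) := by
  have hvar := variance_fun_id_gaussianReal (μ := 0) (v := 1)
  rw [variance_eq_integral aemeasurable_id', integral_id_gaussianReal] at hvar
  simp only [sub_zero, NNReal.coe_one] at hvar
  rw [integral_mul_exp_neg_sq_div_two_eq_integral_gaussianReal (· ^ 2), hvar, mul_one]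

section Gaussian

variable {ι : Type*} [Fintype ι]

lemma integral_mul_mul_exp_neg_dotProduct_self [DecidableEq ι] (i j : ι) :
    Integrable (fun x : ι → ℝ => x i * x j * exp (-(x ⬝ᵥ x) / 2)) ∧
    ∫ x : ι → ℝ, x i * x j * exp (-(x ⬝ᵥ x) / 2)
      = if i = j then √(2 * π) ^ Fintype.card ι else 0 := by
  set n : ι → ℕ := fun k => (if k = i then 1 else 0) + (if k = j then 1 else 0) with hn
  have hprod : (fun x : ι → ℝ => x i * x j * exp (-(x ⬝ᵥ x) / 2))
      = fun x => ∏ k, x k ^ n k * exp (-x k ^ 2 / 2) := by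
    ext x
    simp only [hn, pow_add, pow_ite, pow_one, pow_zero, prod_mul_distrib, prod_ite_eq',
      mem_univ, if_true, ← exp_sum, dotProduct, sum_div, sum_neg_distrib, neg_div, sq]
  rw [hprod]
  refine ⟨Integrable.fintype_prod fun k => integrable_pow_mul_exp_neg_sq_div_two (n k), ?_⟩
  rw [integral_fintype_prod_volume_eq_prod (fun k t => t ^ n k * exp (-t ^ 2 / 2))]
  split_ifs with hij
  · subst hij
    rw [prod_eq_pow_card fun k _ => ?_, card_univ]
    by_cases hk : k = i
    · simp [hn, hk, integral_sq_mul_exp_neg_sq_div_two]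
    · simp [hn, hk, integral_exp_neg_sq_div_two]
  · exact prod_eq_zero (mem_univ i) (by simp [hn, hij, integral_mul_exp_neg_sq_div_two])

lemma integral_sq_dotProduct_mul_exp_neg_dotProduct_self (w : ι → ℝ) :
    Integrable (fun x : ι → ℝ => (w ⬝ᵥ x) ^ 2 * exp (-(x ⬝ᵥ x) / 2)) ∧
    ∫ x : ι → ℝ, (w ⬝ᵥ x) ^ 2 * exp (-(x ⬝ᵥ x) / 2)
      = √(2 * π) ^ Fintype.card ι * (w ⬝ᵥ w) := by
  classical
  have hexpand : (fun x : ι → ℝ => (w ⬝ᵥ x) ^ 2 * exp (-(x ⬝ᵥ x) / 2))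
      = fun x => ∑ i, ∑ j, w i * w j * (x i * x j * exp (-(x ⬝ᵥ x) / 2)) := by
    ext x
    rw [dotProduct, sq, sum_mul_sum, sum_mul]
    exact sum_congr rfl fun i _ => by rw [sum_mul]; exact sum_congr rfl fun j _ => by ring
  have hint (i j : ι) := (integral_mul_mul_exp_neg_dotProduct_self i j).1.const_mul (w i * w j)
  rw [hexpand]
  refine ⟨integrable_finsetSum _ fun i _ => integrable_finsetSum _ fun j _ => hint i j, ?_⟩
  rw [integral_finsetSum _ fun i _ => integrable_finsetSum _ fun j _ => hint i j]
  simp_rw [integral_finsetSum _ fun j _ => hint _ j, integral_const_mul,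
    (integral_mul_mul_exp_neg_dotProduct_self _ _).2, mul_ite, mul_zero, sum_ite_eq,
    mem_univ, if_true, dotProduct, mul_sum]
  exact sum_congr rfl fun i _ => by ring

variable [DecidableEq ι]

lemma measurableEmbedding_mulVec {B : Matrix ι ι ℝ} (hB : B.det ≠ 0) :
    MeasurableEmbedding (B *ᵥ ·) :=
  ((toLin' B).equivOfDetNeZero (by rwa [LinearMap.det_toLin'])).toContinuousLinearEquiv
    |>.toHomeomorph.measurableEmbedding

lemma map_mulVec_volume {B : Matrix ι ι ℝ} (hB : B.det ≠ 0) :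
    volume.map (B *ᵥ ·) = ENNReal.ofReal |B.det⁻¹| • (volume : Measure (ι → ℝ)) :=
  Real.map_matrix_volume_pi_eq_smul_volume_pi hB

lemma integral_comp_mulVec {E : Type*} [NormedAddCommGroup E] [NormedSpace ℝ E]
    {B : Matrix ι ι ℝ} (hB : B.det ≠ 0) (g : (ι → ℝ) → E) :
    ∫ z, g (B *ᵥ z) = |B.det|⁻¹ • ∫ y, g y := by
  rw [← (measurableEmbedding_mulVec hB).integral_map, map_mulVec_volume hB,
    integral_smul_measure, ENNReal.toReal_ofReal (abs_nonneg _), abs_inv]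

lemma integrable_comp_mulVec_iff {E : Type*} [NormedAddCommGroup E]
    {B : Matrix ι ι ℝ} (hB : B.det ≠ 0) {g : (ι → ℝ) → E} :
    Integrable (fun z => g (B *ᵥ z)) ↔ Integrable g := by
  rw [← Function.comp_def, ← (measurableEmbedding_mulVec hB).integrable_map_iff,
    map_mulVec_volume hB, integrable_smul_measure (by simpa using hB) ENNReal.ofReal_ne_top]

open scoped MatrixOrder in
theorem integral_sq_dotProduct_mul_exp_neg_dotProduct_mulVec {M : Matrix ι ι ℝ}
    (hM : M.PosDef) (v : ι → ℝ) :
    Integrable (fun z : ι → ℝ => (v ⬝ᵥ z) ^ 2 * exp (-(z ⬝ᵥ M *ᵥ z) / 2)) ∧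
    ∫ z : ι → ℝ, (v ⬝ᵥ z) ^ 2 * exp (-(z ⬝ᵥ M *ᵥ z) / 2)
      = √(2 * π) ^ Fintype.card ι * (v ⬝ᵥ M⁻¹ *ᵥ v) / √M.det := by
  obtain ⟨B, rfl⟩ := CStarAlgebra.nonneg_iff_eq_star_mul_self.mp hM.posSemidef.nonneg
  rw [star_eq_conjTranspose, conjTranspose_eq_transpose_of_trivial] at hM ⊢
  have hdet : (Bᵀ * B).det = B.det ^ 2 := by rw [det_mul, det_transpose, sq]
  have hB : B.det ≠ 0 := fun h => hM.det_pos.ne' (by rw [hdet, h, sq, mul_zero])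
  have hBinv : B⁻¹ * B = 1 := nonsing_inv_mul B (isUnit_iff_ne_zero.mpr hB)
  set w := v ᵥ* B⁻¹
  have hv (z : ι → ℝ) : v ⬝ᵥ z = w ⬝ᵥ B *ᵥ z := by
    rw [dotProduct_mulVec, vecMul_vecMul, hBinv, vecMul_one]
  have hq (z : ι → ℝ) : z ⬝ᵥ (Bᵀ * B) *ᵥ z = (B *ᵥ z) ⬝ᵥ (B *ᵥ z) := by
    rw [← mulVec_mulVec, dotProduct_mulVec, vecMul_transpose]
  have hw : v ⬝ᵥ (Bᵀ * B)⁻¹ *ᵥ v = w ⬝ᵥ w := by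
    rw [Matrix.mul_inv_rev, ← mulVec_mulVec, dotProduct_mulVec, ← transpose_nonsing_inv,
      mulVec_transpose]
  obtain ⟨hint, hval⟩ := integral_sq_dotProduct_mul_exp_neg_dotProduct_self w
  set G : (ι → ℝ) → ℝ := fun y => (w ⬝ᵥ y) ^ 2 * exp (-(y ⬝ᵥ y) / 2)
  have hfun : (fun z => (v ⬝ᵥ z) ^ 2 * exp (-(z ⬝ᵥ (Bᵀ * B) *ᵥ z) / 2))
      = fun z => G (B *ᵥ z) := by
    ext z
    rw [hv, hq]
  rw [hfun, integral_comp_mulVec hB, integrable_comp_mulVec_iff hB, hval, hw, hdet,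
    sqrt_sq_eq_abs, smul_eq_mul, inv_mul_eq_div]
  exact ⟨hint, rfl⟩

lemma det_one_add_vecMulVec {R : Type*} [CommRing R] (u v : ι → R) :
    (1 + vecMulVec u v).det = 1 + v ⬝ᵥ u := by
  rw [vecMulVec_eq Unit, det_one_add_replicateCol_mul_replicateRow]

lemma inv_one_add_vecMulVec {K : Type*} [Field K] (u v : ι → K) (h : 1 + v ⬝ᵥ u ≠ 0) :
    (1 + vecMulVec u v)⁻¹ = 1 - (1 + v ⬝ᵥ u)⁻¹ • vecMulVec u v := by
  refine inv_eq_right_inv ?_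
  have hc : (1 + v ⬝ᵥ u)⁻¹ + (1 + v ⬝ᵥ u)⁻¹ * (v ⬝ᵥ u) = 1 := by field_simp
  rw [mul_sub, mul_one, add_mul, one_mul, Matrix.mul_smul, vecMulVec_mul_vecMulVec,
    vecMulVec_smul, smul_smul, ← add_smul, hc, one_smul, add_sub_cancel_right]

lemma posDef_one_add_vecMulVec_self (θ : ι → ℝ) : (1 + vecMulVec θ θ).PosDef :=
  PosDef.one.add_posSemidef (by simpa using posSemidef_vecMulVec_self_star θ)

lemma dotProduct_one_add_vecMulVec_self_mulVec (θ z : ι → ℝ) :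
    z ⬝ᵥ (1 + vecMulVec θ θ) *ᵥ z = z ⬝ᵥ z + (θ ⬝ᵥ z) ^ 2 := by
  rw [add_mulVec, one_mulVec, vecMulVec_mulVec, op_smul_eq_smul, dotProduct_add,
    dotProduct_smul, smul_eq_mul, dotProduct_comm z θ, sq]

lemma dotProduct_inv_one_add_vecMulVec_self_mulVec_le (θ v : ι → ℝ) :
    v ⬝ᵥ (1 + vecMulVec θ θ)⁻¹ *ᵥ v ≤ v ⬝ᵥ v := by
  have hpos : 0 < 1 + θ ⬝ᵥ θ :=
    add_pos_of_pos_of_nonneg one_pos (sum_nonneg fun i _ => mul_self_nonneg (θ i))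
  rw [inv_one_add_vecMulVec θ θ hpos.ne', sub_mulVec, one_mulVec, smul_mulVec, vecMulVec_mulVec,
    op_smul_eq_smul, dotProduct_sub, dotProduct_smul, dotProduct_smul, dotProduct_comm v θ,
    smul_eq_mul, smul_eq_mul]
  exact sub_le_self _ (mul_nonneg (inv_nonneg.2 hpos.le) (mul_self_nonneg _))

lemma gaussianPDFReal_mul_prod_gaussianPDFReal (θ z : ι → ℝ) :
    gaussianPDFReal 0 1 (θ ⬝ᵥ z) * ∏ i, gaussianPDFReal 0 1 (z i)
      = (√(2 * π))⁻¹ ^ (Fintype.card ι + 1) * exp (-(z ⬝ᵥ (1 + vecMulVec θ θ) *ᵥ z) / 2) := by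
  have hexp : -(z ⬝ᵥ z + (θ ⬝ᵥ z) ^ 2) / 2 = -(θ ⬝ᵥ z) ^ 2 / 2 + ∑ i, -z i ^ 2 / 2 := by
    simp only [dotProduct, neg_div, sum_neg_distrib, ← sum_div, sq]
    ring
  simp_rw [gaussianPDFReal_zero_one, prod_mul_distrib, prod_const, card_univ, ← exp_sum,
    dotProduct_one_add_vecMulVec_self_mulVec, hexp, exp_add]
  ring

lemma integral_sq_dotProduct_mul_gaussianPDFReal_le {C : ℝ} {f : (ι → ℝ) → ℝ}
    (hf0 : ∀ z, 0 ≤ f z) (hfC : ∀ z, f z ≤ C) (θ v : ι → ℝ) :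
    ∫ z, (z ⬝ᵥ v) ^ 2 * f z * gaussianPDFReal 0 1 (θ ⬝ᵥ z) * ∏ i, gaussianPDFReal 0 1 (z i)
      ≤ C * (v ⬝ᵥ (1 + vecMulVec θ θ)⁻¹ *ᵥ v) / (√(2 * π) * √(1 + vecMulVec θ θ).det) := by
  set M := 1 + vecMulVec θ θ
  set c := (√(2 * π))⁻¹ ^ (Fintype.card ι + 1)
  obtain ⟨hint, hval⟩ := integral_sq_dotProduct_mul_exp_neg_dotProduct_mulVec (M := M)
    (posDef_one_add_vecMulVec_self θ) v
  calc _ ≤ ∫ z, C * c * ((v ⬝ᵥ z) ^ 2 * exp (-(z ⬝ᵥ M *ᵥ z) / 2)) := by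
        refine integral_mono_of_nonneg (ae_of_all _ fun z => ?_) (hint.const_mul _)
          (ae_of_all _ fun z => ?_)
        · have := hf0 z
          simp only [Pi.zero_apply, mul_assoc _ (gaussianPDFReal 0 1 _),
            gaussianPDFReal_mul_prod_gaussianPDFReal]
          positivity
        · simp only [mul_assoc _ (gaussianPDFReal 0 1 _),
            gaussianPDFReal_mul_prod_gaussianPDFReal, dotProduct_comm z v]
          calc _ ≤ (v ⬝ᵥ z) ^ 2 * C * (c * exp (-(z ⬝ᵥ M *ᵥ z) / 2)) := by
                gcongr
                exact hfC z
            _ = _ := by ring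
    _ = _ := by
        rw [integral_const_mul, hval]
        simp only [c, inv_pow, pow_succ]
        field_simp

end Gaussian

theorem stmt13_general (d : ℕ) (C : ℝ) (θs : Fin d → ℝ)
    (f : (Fin d → ℝ) → ℝ) (hf0 : ∀ z, 0 ≤ f z) (hfC : ∀ z, f z ≤ C)
    (v : Fin d → ℝ) (hv : ∑ i, (v i) ^ 2 = 1) :
    let φ : ℝ → ℝ := fun u => (Real.sqrt (2 * Real.pi))⁻¹ * Real.exp (-u ^ 2 / 2)
    let M : Matrix (Fin d) (Fin d) ℝ := 1 + Matrix.vecMulVec θs θs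
    (2 * ∫ z : Fin d → ℝ,
        (∑ i, z i * v i) ^ 2 * f z * φ (∑ i, θs i * z i) * ∏ i, φ (z i))
      ≤ 2 * C * (v ⬝ᵥ (M⁻¹ *ᵥ v)) / (Real.sqrt (2 * Real.pi) * Real.sqrt M.det) ∧
    2 * C * (v ⬝ᵥ (M⁻¹ *ᵥ v)) / (Real.sqrt (2 * Real.pi) * Real.sqrt M.det)
      ≤ 2 * C / (Real.sqrt (2 * Real.pi) * Real.sqrt (1 + ∑ i, (θs i) ^ 2)) := by
  intro φ M
  have hφ : φ = gaussianPDFReal 0 1 := funext fun u => (gaussianPDFReal_zero_one u).symm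
  have hq : v ⬝ᵥ M⁻¹ *ᵥ v ≤ 1 :=
    (dotProduct_inv_one_add_vecMulVec_self_mulVec_le θs v).trans_eq
      (by rw [dotProduct]; simpa only [sq] using hv)
  have hdet : M.det = 1 + ∑ i, θs i ^ 2 := by
    simp only [M, det_one_add_vecMulVec, dotProduct, sq]
  constructor
  · rw [hφ, mul_assoc 2 C, mul_div_assoc]
    gcongr
    exact integral_sq_dotProduct_mul_gaussianPDFReal_le hf0 hfC θs v
  · rw [hdet]
    gcongr ?_ / _
    exact mul_le_of_le_one_right (by linarith [(hf0 0).trans (hfC 0)]) hq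

/-- Counterexample to restricted strong convexity with diverging ‖θ*‖₂: for
Z ~ N(0, I_d), a conditional density value f_{u|z}(0) ≤ C, and a unit vector v,
the curvature quantity 2∫(zᵀv)² f_{u|z}(0) φ(θ*ᵀz)∏φ(zⱼ) dz is bounded by
2C·vᵀ(I + θ*θ*ᵀ)⁻¹v/(√(2π)·√det(I + θ*θ*ᵀ)), which is at most
2C/(√(2π)·√(1 + ‖θ*‖₂²)). -/
theorem stmt13 (d : ℕ) (C : ℝ) (hC : 0 < C) (θs : Fin d → ℝ)
    (f : (Fin d → ℝ) → ℝ) (hf0 : ∀ z, 0 ≤ f z) (hfC : ∀ z, f z ≤ C)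
    (v : Fin d → ℝ) (hv : ∑ i, (v i) ^ 2 = 1) :
    let φ : ℝ → ℝ := fun u => (Real.sqrt (2 * Real.pi))⁻¹ * Real.exp (-u ^ 2 / 2)
    let M : Matrix (Fin d) (Fin d) ℝ := 1 + Matrix.vecMulVec θs θs
    (2 * ∫ z : Fin d → ℝ,
        (∑ i, z i * v i) ^ 2 * f z * φ (∑ i, θs i * z i) * ∏ i, φ (z i))
      ≤ 2 * C * (v ⬝ᵥ (M⁻¹ *ᵥ v)) / (Real.sqrt (2 * Real.pi) * Real.sqrt M.det) ∧
    2 * C * (v ⬝ᵥ (M⁻¹ *ᵥ v)) / (Real.sqrt (2 * Real.pi) * Real.sqrt M.det)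
      ≤ 2 * C / (Real.sqrt (2 * Real.pi) * Real.sqrt (1 + ∑ i, (θs i) ^ 2)) :=
  stmt13_general d C θs f hf0 hfC v hv
end

section
/- Let K: ℝ → ℝ be an even kernel with |K(t)| ≤ K_max, ∫K = 1, and suppose ∫_{c}^{∞}|K(t)|dt ≤ ε. Let f be a density bounded by p_max, l times differentiable at a point x₀ with the l-th derivative satisfying the Hölder bound |f^{(l)}(x₀+Δ) − f^{(l)}(x₀)| ≤ L|Δ|^{β−l} (l = ⌊β⌋), and suppose ∫ t^j K(t)dt = 0 for 1 ≤ j ≤ l and ∫|K(t)||t|^β dt < ∞. Then for any interval [A, B] ⊇ [x₀ − cδ, x₀ + cδ], |∫_A^B (1/δ)K((x−x₀)/δ)f(x)dx − f(x₀)| ≤ (L/l!)·δ^β·∫|K(u)||u|^β du + 2 p_max ε. -/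
/-!
Substituting `u = (x - x₀) / δ` turns the smoothed integral into `∫ K(u) f(x₀ + δu)` over
`[(A - x₀)/δ, (B - x₀)/δ] ⊇ [-c, c]`. Over all of `ℝ`, `∫ K = 1` and the vanishing moments turn
`∫ K(u) f(x₀ + δu) du - f(x₀)` into the integral of `K` against the remainder of the degree-`l`
Taylor polynomial. The Lagrange form of that remainder and the Hölder bound on `f⁽ˡ⁾` bound the
remainder by `L/l! · |δu|^β`. What is cut off lies in `|u| ≥ c`; there `|f| ≤ p_max`, and since
`K` is even the tail mass of `|K|` is `2 ∫_c^∞ |K|`.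
-/

open MeasureTheory Set
open scoped Nat

theorem taylorWithinEval_eq_sum_iteratedDeriv {f : ℝ → ℝ} {n : ℕ} {s : Set ℝ} {x₀ : ℝ}
    (hs : UniqueDiffOn ℝ s) (hx₀ : x₀ ∈ s) (hf : ContDiffAt ℝ n f x₀) (x : ℝ) :
    taylorWithinEval f n s x₀ x =
      ∑ k ∈ Finset.range (n + 1), iteratedDeriv k f x₀ * (x - x₀) ^ k / k ! := by
  rw [taylor_within_apply]
  refine Finset.sum_congr rfl fun k hk => ?_
  rw [iteratedDerivWithin_eq_iteratedDeriv hs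
    (hf.of_le (by exact_mod_cast Finset.mem_range_succ_iff.mp hk)) hx₀, smul_eq_mul]
  ring

theorem abs_sub_taylor_le_of_holder {f : ℝ → ℝ} {l : ℕ} {x₀ L β : ℝ}
    (hf : ContDiff ℝ l f) (hβl : (l : ℝ) < β)
    (hHolder : ∀ Δ : ℝ,
      |iteratedDeriv l f (x₀ + Δ) - iteratedDeriv l f x₀| ≤ L * |Δ| ^ (β - l))
    (Δ : ℝ) :
    |f (x₀ + Δ) - ∑ j ∈ Finset.range (l + 1), iteratedDeriv j f x₀ * Δ ^ j / j !|
      ≤ L / l ! * |Δ| ^ β := by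
  rcases l with _ | n
  · simpa using hHolder Δ
  have hβ : 0 < β := (Nat.cast_nonneg _).trans_lt hβl
  rcases eq_or_ne Δ 0 with rfl | hΔ
  · simp [Finset.sum_range_succ', Real.zero_rpow hβ.ne']
  have hL : 0 ≤ L := by simpa using (abs_nonneg _).trans (hHolder 1)
  have hx : x₀ ≠ x₀ + Δ := by simpa using hΔ
  obtain ⟨ξ, hξ, hrem⟩ := taylor_mean_remainder_lagrange_iteratedDeriv hx hf.contDiffOn
  rw [taylorWithinEval_eq_sum_iteratedDeriv (uniqueDiffOn_uIcc hx) left_mem_uIcc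
    (hf.of_le (by exact_mod_cast n.le_succ)).contDiffAt, add_sub_cancel_left] at hrem
  have hξΔ : |ξ - x₀| ≤ |Δ| := by
    simpa using abs_sub_left_of_mem_uIcc (uIoo_subset_uIcc_self hξ)
  have hremainder :
      f (x₀ + Δ) - ∑ j ∈ Finset.range (n + 1 + 1), iteratedDeriv j f x₀ * Δ ^ j / j ! =
      (iteratedDeriv (n + 1) f (x₀ + (ξ - x₀)) - iteratedDeriv (n + 1) f x₀) * Δ ^ (n + 1)
        / (n + 1) ! := by
    rw [Finset.sum_range_succ, add_sub_cancel]
    linear_combination hrem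
  calc _ = |iteratedDeriv (n + 1) f (x₀ + (ξ - x₀)) - iteratedDeriv (n + 1) f x₀|
        * |Δ| ^ (n + 1) / (n + 1) ! := by
        rw [hremainder, abs_div, abs_mul, abs_pow, Nat.abs_cast]
    _ ≤ L * |Δ| ^ (β - (n + 1 : ℕ)) * |Δ| ^ (n + 1) / (n + 1) ! := by
        gcongr
        exact (hHolder _).trans (by gcongr)
    _ = L / (n + 1) ! * |Δ| ^ β := by
        rw [← Real.rpow_natCast |Δ| (n + 1), mul_assoc, ← Real.rpow_add (abs_pos.mpr hΔ)]
        ring_nf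

theorem integrable_pow_mul_of_integrable_rpow_mul {K : ℝ → ℝ} {β : ℝ} {m : ℕ}
    (hK : Integrable K) (hKβ : Integrable (fun t => |K t| * |t| ^ β)) (hm : (m : ℝ) ≤ β) :
    Integrable (fun t => t ^ m * K t) := by
  refine (hK.abs.add hKβ).mono' (by fun_prop) (.of_forall fun t => ?_)
  have hpow : |t| ^ m ≤ 1 + |t| ^ β := by
    rcases le_or_gt |t| 1 with ht | ht
    · linarith [pow_le_one₀ (n := m) (abs_nonneg t) ht, Real.rpow_nonneg (abs_nonneg t) β]
    · rw [← Real.rpow_natCast]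
      linarith [Real.rpow_le_rpow_of_exponent_le ht.le hm]
  calc ‖t ^ m * K t‖ = |t| ^ m * |K t| := by
        rw [norm_mul, norm_pow, Real.norm_eq_abs, Real.norm_eq_abs]
    _ ≤ (1 + |t| ^ β) * |K t| := by gcongr
    _ = |K t| + |K t| * |t| ^ β := by ring

theorem mul_polynomial_eq_sum (K : ℝ → ℝ) (a : ℕ → ℝ) (l : ℕ) :
    (fun t => K t * ∑ j ∈ Finset.range (l + 1), a j * t ^ j) =
      fun t => ∑ j ∈ Finset.range (l + 1), a j * (t ^ j * K t) := by
  ext t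
  rw [Finset.mul_sum]
  exact Finset.sum_congr rfl fun j _ => by ring

section Moments

variable {K : ℝ → ℝ} {l : ℕ} {β : ℝ}

theorem integrable_mul_polynomial (hK : Integrable K)
    (hKβ : Integrable (fun t => |K t| * |t| ^ β)) (hlβ : (l : ℝ) ≤ β) (a : ℕ → ℝ) :
    Integrable (fun t => K t * ∑ j ∈ Finset.range (l + 1), a j * t ^ j) := by
  rw [mul_polynomial_eq_sum]
  refine integrable_finsetSum _ fun j hj => .const_mul ?_ _
  exact integrable_pow_mul_of_integrable_rpow_mul hK hKβ
    (le_trans (by exact_mod_cast Finset.mem_range_succ_iff.mp hj) hlβ)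

theorem integral_mul_polynomial_of_moments_eq_zero (hK : Integrable K)
    (hKβ : Integrable (fun t => |K t| * |t| ^ β)) (hlβ : (l : ℝ) ≤ β)
    (hKone : ∫ t, K t = 1) (hKmoments : ∀ j : ℕ, 1 ≤ j → j ≤ l → ∫ t, t ^ j * K t = 0)
    (a : ℕ → ℝ) :
    ∫ t, K t * ∑ j ∈ Finset.range (l + 1), a j * t ^ j = a 0 := by
  rw [mul_polynomial_eq_sum, integral_finsetSum]
  · simp_rw [integral_const_mul]
    rw [Finset.sum_range_succ', Finset.sum_eq_zero fun j hj =>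
      by rw [hKmoments (j + 1) (by omega) (by simpa using hj), mul_zero]]
    simp [hKone]
  · intro j hj
    exact (integrable_pow_mul_of_integrable_rpow_mul hK hKβ
      (le_trans (by exact_mod_cast Finset.mem_range_succ_iff.mp hj) hlβ)).const_mul _

theorem abs_integral_mul_sub_le_of_moments {g : ℝ → ℝ} {C : ℝ}
    (hK : Integrable K) (hKβ : Integrable (fun t => |K t| * |t| ^ β)) (hlβ : (l : ℝ) ≤ β)
    (hKone : ∫ t, K t = 1) (hKmoments : ∀ j : ℕ, 1 ≤ j → j ≤ l → ∫ t, t ^ j * K t = 0)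
    (hg : Integrable (fun t => K t * g t)) (a : ℕ → ℝ)
    (hga : ∀ t, |g t - ∑ j ∈ Finset.range (l + 1), a j * t ^ j| ≤ C * |t| ^ β) :
    |(∫ t, K t * g t) - a 0| ≤ C * ∫ t, |K t| * |t| ^ β := by
  have hP := integrable_mul_polynomial hK hKβ hlβ a
  have hR : Integrable (fun t => K t * (g t - ∑ j ∈ Finset.range (l + 1), a j * t ^ j)) := by
    simp_rw [mul_sub]
    exact hg.sub hP
  calc |(∫ t, K t * g t) - a 0|
      = |∫ t, K t * (g t - ∑ j ∈ Finset.range (l + 1), a j * t ^ j)| := by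
        simp_rw [mul_sub]
        rw [integral_sub hg hP, integral_mul_polynomial_of_moments_eq_zero hK hKβ hlβ hKone
          hKmoments a]
    _ ≤ ∫ t, |K t * (g t - ∑ j ∈ Finset.range (l + 1), a j * t ^ j)| :=
        abs_integral_le_integral_abs
    _ ≤ ∫ t, C * (|K t| * |t| ^ β) := by
        refine integral_mono hR.abs (hKβ.const_mul C) fun t => ?_
        simp only [abs_mul]
        nlinarith [hga t, abs_nonneg (K t)]
    _ = C * ∫ t, |K t| * |t| ^ β := integral_const_mul C _

end Moments

theorem setIntegral_Iic_neg_eq_setIntegral_Ici_of_even {h : ℝ → ℝ} (hh : ∀ t, h (-t) = h t)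
    (c : ℝ) : ∫ t in Iic (-c), h t = ∫ t in Ici c, h t := by
  calc ∫ t in Iic (-c), h t = ∫ t in Iic (-c), h (-t) := by simp_rw [hh]
    _ = ∫ t in Ici c, h t := by
        rw [integral_comp_neg_Iic, neg_neg, integral_Ici_eq_integral_Ioi]

theorem abs_setIntegral_compl_Ioc_le {K g : ℝ → ℝ} {a b c M : ℝ}
    (hK : Integrable K) (hKeven : ∀ t, K (-t) = K t) (hg : Integrable (fun t => K t * g t))
    (hgM : ∀ t, |g t| ≤ M) (hc : 0 < c) (ha : a ≤ -c) (hb : c ≤ b) :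
    |∫ t in (Ioc a b)ᶜ, K t * g t| ≤ 2 * M * ∫ t in Ici c, |K t| := by
  have hM : 0 ≤ M := (abs_nonneg _).trans (hgM 0)
  have hKM : Integrable (fun t => M * |K t|) := hK.abs.const_mul M
  have hcompl : (Ioc a b)ᶜ ⊆ Iic (-c) ∪ Ici c := by
    intro t ht
    simp only [mem_compl_iff, mem_Ioc, not_and_or, not_lt, not_le] at ht
    rcases ht with ht | ht
    · exact .inl (ht.trans ha)
    · exact .inr (hb.trans ht.le)
  have hdisj : Disjoint (Iic (-c)) (Ici c) := Iic_disjoint_Ici.mpr (by linarith)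
  calc |∫ t in (Ioc a b)ᶜ, K t * g t| ≤ ∫ t in (Ioc a b)ᶜ, |K t * g t| :=
        abs_integral_le_integral_abs
    _ ≤ ∫ t in (Ioc a b)ᶜ, M * |K t| := by
        refine setIntegral_mono hg.abs.integrableOn hKM.integrableOn fun t => ?_
        rw [abs_mul, mul_comm]
        exact mul_le_mul_of_nonneg_right (hgM t) (abs_nonneg _)
    _ ≤ ∫ t in Iic (-c) ∪ Ici c, M * |K t| :=
        setIntegral_mono_set hKM.integrableOn (.of_forall fun t => by positivity)
          hcompl.eventuallyLE
    _ = M * ((∫ t in Iic (-c), |K t|) + ∫ t in Ici c, |K t|) := by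
        rw [setIntegral_union hdisj measurableSet_Ici hKM.integrableOn hKM.integrableOn,
          integral_const_mul, integral_const_mul, mul_add]
    _ = 2 * M * ∫ t in Ici c, |K t| := by
        rw [setIntegral_Iic_neg_eq_setIntegral_Ici_of_even (fun t => by rw [hKeven])]
        ring

theorem intervalIntegral_rescaled_kernel_mul_eq (K f : ℝ → ℝ) {δ : ℝ} (hδ : δ ≠ 0)
    (x₀ A B : ℝ) :
    ∫ x in A..B, (1 / δ) * K ((x - x₀) / δ) * f x =
      ∫ u in (A - x₀) / δ..(B - x₀) / δ, K u * f (x₀ + δ * u) := by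
  have hx : ∀ x, (1 / δ) * K ((x - x₀) / δ) * f x =
      (1 / δ) * (K (x / δ - x₀ / δ) * f (x₀ + δ * (x / δ - x₀ / δ))) := fun x => by
    rw [← sub_div, mul_div_cancel₀ _ hδ, add_sub_cancel, mul_assoc]
  simp_rw [hx, intervalIntegral.integral_const_mul,
    intervalIntegral.integral_comp_div_sub (fun u => K u * f (x₀ + δ * u)) hδ, smul_eq_mul,
    ← mul_assoc, one_div_mul_cancel hδ, one_mul, sub_div]

theorem abs_integral_kernel_mul_comp_sub_le {K f : ℝ → ℝ} {l : ℕ} {x₀ L β δ : ℝ}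
    (hδ : 0 ≤ δ) (hβl : (l : ℝ) < β)
    (hK : Integrable K) (hKβ : Integrable (fun t => |K t| * |t| ^ β))
    (hKone : ∫ t, K t = 1) (hKmoments : ∀ j : ℕ, 1 ≤ j → j ≤ l → ∫ t, t ^ j * K t = 0)
    (hf : ContDiff ℝ l f)
    (hHolder : ∀ Δ : ℝ,
      |iteratedDeriv l f (x₀ + Δ) - iteratedDeriv l f x₀| ≤ L * |Δ| ^ (β - l))
    (hKf : Integrable (fun t => K t * f (x₀ + δ * t))) :
    |(∫ t, K t * f (x₀ + δ * t)) - f x₀| ≤ L / l ! * δ ^ β * ∫ t, |K t| * |t| ^ β := by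
  have htaylor : ∀ t, |f (x₀ + δ * t) - ∑ j ∈ Finset.range (l + 1),
      iteratedDeriv j f x₀ * δ ^ j / j ! * t ^ j| ≤ L / l ! * δ ^ β * |t| ^ β := fun t => by
    have h := abs_sub_taylor_le_of_holder hf hβl hHolder (δ * t)
    rw [abs_mul, abs_of_nonneg hδ, Real.mul_rpow hδ (abs_nonneg t), ← mul_assoc] at h
    convert h using 4 with j
    ring
  simpa using abs_integral_mul_sub_le_of_moments hK hKβ hβl.le hKone hKmoments hKf _ htaylor

theorem stmt16_general (K f : ℝ → ℝ) (pmax L ε δ c x₀ β A B : ℝ) (l : ℕ)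
    (hδ : 0 < δ) (hc : 0 < c)
    (hβl : (l : ℝ) < β)
    (hKint : Integrable K volume)
    (hKeven : ∀ t, K (-t) = K t)
    (hKone : (∫ t, K t) = 1)
    (hKtail : (∫ t in Set.Ici c, |K t|) ≤ ε)
    (hKmoments : ∀ j : ℕ, 1 ≤ j → j ≤ l → (∫ t, t ^ j * K t) = 0)
    (hKabs : Integrable (fun t => |K t| * |t| ^ β) volume)
    (hf0 : ∀ x, 0 ≤ f x) (hfmax : ∀ x, f x ≤ pmax)
    (hfd : ContDiff ℝ l f)
    (hHolder : ∀ Δ : ℝ,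
      |iteratedDeriv l f (x₀ + Δ) - iteratedDeriv l f x₀| ≤ L * |Δ| ^ (β - l))
    (hA : A ≤ x₀ - c * δ) (hB : x₀ + c * δ ≤ B) :
    |(∫ x in A..B, (1 / δ) * K ((x - x₀) / δ) * f x) - f x₀|
      ≤ (L / l.factorial) * δ ^ β * (∫ u, |K u| * |u| ^ β) + 2 * pmax * ε := by
  set a := (A - x₀) / δ
  set b := (B - x₀) / δ
  have ha : a ≤ -c := by rw [div_le_iff₀ hδ]; linarith
  have hb : c ≤ b := by rw [le_div_iff₀ hδ]; linarith
  have hpmax : 0 ≤ pmax := (hf0 0).trans (hfmax 0)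
  have hfbdd : ∀ t, |f (x₀ + δ * t)| ≤ pmax := fun t =>
    abs_le.mpr ⟨by linarith [hf0 (x₀ + δ * t)], hfmax _⟩
  have hKf : Integrable (fun t => K t * f (x₀ + δ * t)) :=
    hKint.mul_bdd (hfd.continuous.comp (by fun_prop)).aestronglyMeasurable (.of_forall hfbdd)
  have hbias := abs_integral_kernel_mul_comp_sub_le hδ.le hβl hKint hKabs hKone hKmoments hfd
    hHolder hKf
  have htail := abs_setIntegral_compl_Ioc_le hKint hKeven hKf hfbdd hc ha hb
  rw [intervalIntegral_rescaled_kernel_mul_eq K f hδ.ne', intervalIntegral.integral_of_le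
    (by linarith), eq_sub_of_add_eq (integral_add_compl measurableSet_Ioc hKf), sub_right_comm]
  exact (abs_sub _ _).trans
    (add_le_add hbias (htail.trans (mul_le_mul_of_nonneg_left hKtail (by linarith))))

/-- Kernel-smoothing bias bound of order δ^β: for an even, bounded kernel K of
order l (vanishing moments 1..l) with tail mass ∫_{c}^∞ |K| ≤ ε, and a density f
bounded by p_max that is l-times continuously differentiable with l-th derivative
β-Hölder at x₀ (l = ⌊β⌋, l < β ≤ l+1), for any interval [A,B] ⊇ [x₀-cδ, x₀+cδ]:
|∫_A^B (1/δ)K((x-x₀)/δ) f(x) dx - f(x₀)| ≤ (L/l!)·δ^β·∫|K(u)||u|^β du + 2 p_max ε. -/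
theorem stmt16 (K f : ℝ → ℝ) (Kmax pmax L ε δ c x₀ β A B : ℝ) (l : ℕ)
    (hδ : 0 < δ) (hc : 0 < c) (hε : 0 ≤ ε) (hL : 0 < L)
    (hβl : (l : ℝ) < β) (hβl' : β ≤ l + 1)
    (hKint : Integrable K volume)
    (hKeven : ∀ t, K (-t) = K t)
    (hKbound : ∀ t, |K t| ≤ Kmax)
    (hKone : (∫ t, K t) = 1)
    (hKtail : (∫ t in Set.Ici c, |K t|) ≤ ε)
    (hKmoments : ∀ j : ℕ, 1 ≤ j → j ≤ l → (∫ t, t ^ j * K t) = 0)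
    (hKabs : Integrable (fun t => |K t| * |t| ^ β) volume)
    (hf0 : ∀ x, 0 ≤ f x) (hfmax : ∀ x, f x ≤ pmax)
    (hfd : ContDiff ℝ l f)
    (hHolder : ∀ Δ : ℝ,
      |iteratedDeriv l f (x₀ + Δ) - iteratedDeriv l f x₀| ≤ L * |Δ| ^ (β - l))
    (hA : A ≤ x₀ - c * δ) (hB : x₀ + c * δ ≤ B) :
    |(∫ x in A..B, (1 / δ) * K ((x - x₀) / δ) * f x) - f x₀|
      ≤ (L / l.factorial) * δ ^ β * (∫ u, |K u| * |u| ^ β) + 2 * pmax * ε :=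
  stmt16_general K f pmax L ε δ c x₀ β A B l hδ hc hβl hKint hKeven hKone hKtail hKmoments hKabs hf0
    hfmax hfd hHolder hA hB
end

section
/- Let t > 0, β ≥ 2, and define N_K = N/2 and N_{K−j} = t^{(1−β^{−j})/(β−1)}·(N/2)^{β^{−j}} for 1 ≤ j ≤ K−2 (i.e., N_k = (t·N_{k+1})^{1/β}). If N ≥ t^{1/(β−1)}·2^K, then N_{K−j} ≤ N/2^{j+1} for all 0 ≤ j ≤ K−2. -/
/-!
Write `s = t ^ (1 / (β - 1))` and `b = β ^ (-j)`, so that `N_{K-j} = s ^ (1 - b) * (N / 2) ^ b`.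
The budget says `s ≤ N / 2 ^ K`, hence `N_{K-j} ≤ N / 2 ^ (K (1 - b) + b)`, and it remains to see
`K (1 - b) + b ≥ j + 1`, i.e. `β ^ (-j) (K - 1) ≤ K - j - 1`; this follows from `β ^ j ≥ 2 ^ j ≥ j + 1`.
-/

open Real

theorem add_le_two_pow_mul (j m : ℕ) (hm : 1 ≤ m) : j + m ≤ 2 ^ j * m := by
  have := Nat.lt_two_pow_self (n := j)
  nlinarith

theorem rpow_neg_mul_sub_one_le {β : ℝ} (hβ : 2 ≤ β) {j K : ℕ} (hj : j ≤ K - 2) :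
    β ^ (-(j : ℝ)) * (K - 1) ≤ K - j - 1 := by
  rcases Nat.eq_zero_or_pos j with rfl | hj_pos
  · simp
  obtain ⟨m, rfl⟩ : ∃ m, K = j + m + 1 := ⟨K - j - 1, by omega⟩
  have hpow : (2 : ℝ) ^ j ≤ β ^ j := pow_le_pow_left₀ (by norm_num) hβ j
  have hnat : (j + m : ℝ) ≤ 2 ^ j * m := by exact_mod_cast add_le_two_pow_mul j m (by omega)
  rw [rpow_neg (by linarith), rpow_natCast]
  push_cast
  rw [inv_mul_le_iff₀ (by positivity)]
  nlinarith [Nat.cast_nonneg (α := ℝ) m]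

theorem rpow_one_sub_mul_rpow_le {s N b K : ℝ} (hs : 0 ≤ s) (hb1 : b ≤ 1)
    (h : s * 2 ^ K ≤ N) : s ^ (1 - b) * (N / 2) ^ b ≤ N * 2 ^ (-(K * (1 - b) + b)) := by
  have hN : 0 ≤ N := le_trans (by positivity) h
  have hsN : s ≤ N * 2 ^ (-K) := by
    rwa [rpow_neg zero_le_two, ← div_eq_mul_inv, le_div_iff₀ (by positivity)]
  calc s ^ (1 - b) * (N / 2) ^ b ≤ (N * 2 ^ (-K)) ^ (1 - b) * (N * 2 ^ (-1 : ℝ)) ^ b := by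
        rw [rpow_neg_one, ← div_eq_mul_inv]
        gcongr
    _ = N ^ (1 - b) * N ^ b * (2 ^ (-K * (1 - b)) * 2 ^ (-1 * b)) := by
        rw [mul_rpow hN (by positivity), mul_rpow hN (by positivity), ← rpow_mul zero_le_two,
          ← rpow_mul zero_le_two]
        ring
    _ = N * 2 ^ (-(K * (1 - b) + b)) := by
        rw [← rpow_add' hN (by norm_num), ← rpow_add zero_lt_two, sub_add_cancel, rpow_one]
        ring_nf

theorem stmt17_general (t β N : ℝ) (K : ℕ) (ht : 0 < t) (hβ : 2 ≤ β)
    (hbudget : t ^ (1 / (β - 1)) * 2 ^ K ≤ N) :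
    ∀ j : ℕ, j ≤ K - 2 →
      t ^ ((1 - β ^ (-(j : ℝ))) / (β - 1)) * (N / 2) ^ (β ^ (-(j : ℝ)))
        ≤ N / 2 ^ (j + 1) := by
  intro j hj
  set b := β ^ (-(j : ℝ))
  have hb1 : b ≤ 1 := rpow_le_one_of_one_le_of_nonpos (by linarith) (by simp)
  have hN : 0 ≤ N := le_trans (by positivity) hbudget
  have hexp : j + 1 ≤ (K : ℝ) * (1 - b) + b := by
    linarith [rpow_neg_mul_sub_one_le hβ hj]
  calc t ^ ((1 - b) / (β - 1)) * (N / 2) ^ b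
      = (t ^ (1 / (β - 1))) ^ (1 - b) * (N / 2) ^ b := by
        rw [← rpow_mul ht.le, one_div_mul_eq_div]
    _ ≤ N * 2 ^ (-((K : ℝ) * (1 - b) + b)) :=
        rpow_one_sub_mul_rpow_le (by positivity) hb1 (by rwa [rpow_natCast])
    _ ≤ N * 2 ^ (-((j : ℝ) + 1)) := by gcongr; norm_num
    _ = N / 2 ^ (j + 1) := by
        rw [rpow_neg zero_le_two, ← div_eq_mul_inv]
        norm_cast

/-- Budget allocation: with N_K = N/2 and N_{K-j} = t^{(1-β^{-j})/(β-1)}·(N/2)^{β^{-j}}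
(solving N_k = (t·N_{k+1})^{1/β}), if N ≥ t^{1/(β-1)}·2^K and β ≥ 2, then
N_{K-j} ≤ N/2^{j+1} for all 0 ≤ j ≤ K-2. -/
theorem stmt17 (t β N : ℝ) (K : ℕ) (ht : 0 < t) (hβ : 2 ≤ β) (hN : 0 < N)
    (hbudget : t ^ (1 / (β - 1)) * 2 ^ K ≤ N) :
    ∀ j : ℕ, j ≤ K - 2 →
      t ^ ((1 - β ^ (-(j : ℝ))) / (β - 1)) * (N / 2) ^ (β ^ (-(j : ℝ)))
        ≤ N / 2 ^ (j + 1) :=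
  stmt17_general t β N K ht hβ hbudget
end
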